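/- Let λ > 0 and fix integers i < j. With Ωᵢⱼ⁽ⁿ⁾ as in the equicorrelational one-dimensional Gaussian graphical model, the absolute error satisfies Ωᵢⱼ⁽ⁿ⁾ - e^{-(j-i)λ} = O(e^{-2(n+1)λ}) as n → ∞, where Ωᵢⱼ⁽ⁿ⁾ = e^{-(j-i)λ}·√( (1 - e^{-2(n+1-j)λ})·(1 - e^{-2(n+1+i)λ}) / ((1 - e^{-2(n+1-i)λ})·(1 - e^{-2(n+1+j)λ})) ). -/

import Mathlib

/-!
Write `ε n = e^{-2(n+1)λ}`. Each of the four factors `1 - e^{-2(n+1±k)λ}` is `1 - e^{∓2kλ} ε n`,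
i.e. `1 + O(ε)`. Functions of the form `1 + O(ε)` with `ε → 0` are closed under products, quotients
and square roots, so the radicand is `1 + O(ε)`, and so is its square root.
-/

open Filter Asymptotics Real Topology

lemma abs_sqrt_sub_one_le (x : ℝ) : |√x - 1| ≤ |x - 1| := by
  rcases le_or_gt 0 x with hx | hx
  · have hfactor : x - 1 = (√x - 1) * (√x + 1) := by nlinarith [sq_sqrt hx]
    rw [hfactor, abs_mul]
    refine le_mul_of_one_le_right (abs_nonneg _) ?_
    rw [abs_of_pos (by positivity)]
    linarith [sqrt_nonneg x]
  · rw [sqrt_eq_zero_of_nonpos hx.le, abs_of_neg (by linarith : x - 1 < 0)]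
    simp only [zero_sub, abs_neg, abs_one]
    linarith

section OnePlusBigO

variable {α : Type*} {l : Filter α} {ε f g : α → ℝ}

lemma isBigO_mul_sub_one (hε : Tendsto ε l (𝓝 0)) (hf : (fun x => f x - 1) =O[l] ε)
    (hg : (fun x => g x - 1) =O[l] ε) : (fun x => f x * g x - 1) =O[l] ε := by
  have hg_bdd : (fun x => g x - 1) =O[l] (fun _ => (1 : ℝ)) :=
    (hg.trans_tendsto hε).isBigO_one ℝ
  have hprod : (fun x => (f x - 1) * (g x - 1)) =O[l] ε := by
    simpa using hf.mul hg_bdd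
  refine ((hprod.add hf).add hg).congr_left fun x => ?_
  ring

lemma isBigO_inv_sub_one (hε : Tendsto ε l (𝓝 0)) (hf : (fun x => f x - 1) =O[l] ε) :
    (fun x => (f x)⁻¹ - 1) =O[l] ε := by
  have hf_lim : Tendsto f l (𝓝 1) := by
    simpa using (hf.trans_tendsto hε).add_const 1
  have hinv_bdd : (fun x => (f x)⁻¹) =O[l] (fun _ => (1 : ℝ)) :=
    (hf_lim.inv₀ one_ne_zero).isBigO_one ℝ
  have hprod : (fun x => -(f x - 1) * (f x)⁻¹) =O[l] ε := by
    simpa using hf.neg_left.mul hinv_bdd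
  refine hprod.congr' ?_ EventuallyEq.rfl
  filter_upwards [hf_lim.eventually_ne one_ne_zero] with x hx
  field_simp
  ring

lemma isBigO_div_sub_one (hε : Tendsto ε l (𝓝 0)) (hf : (fun x => f x - 1) =O[l] ε)
    (hg : (fun x => g x - 1) =O[l] ε) : (fun x => f x / g x - 1) =O[l] ε := by
  simpa only [div_eq_mul_inv] using isBigO_mul_sub_one hε hf (isBigO_inv_sub_one hε hg)

lemma isBigO_const_mul_sqrt_sub (C : ℝ) (hf : (fun x => f x - 1) =O[l] ε) :
    (fun x => C * √(f x) - C) =O[l] ε := by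
  have hsqrt : (fun x => √(f x) - 1) =O[l] ε :=
    (IsBigO.of_bound 1 (Eventually.of_forall fun x => by
      simpa [Real.norm_eq_abs] using abs_sqrt_sub_one_le (f x))).trans hf
  refine (hsqrt.const_mul_left C).congr_left fun x => ?_
  ring

end OnePlusBigO

lemma tendsto_exp_neg_two_mul_succ_mul {l : ℝ} (hl : 0 < l) :
    Tendsto (fun n : ℕ => exp (-2 * ((n : ℝ) + 1) * l)) atTop (𝓝 0) := by
  have hexponent : Tendsto (fun n : ℕ => -2 * l * ((n : ℝ) + 1)) atTop atBot :=
    (tendsto_atTop_add_const_right _ 1 tendsto_natCast_atTop_atTop).const_mul_atTop_of_neg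
      (by linarith)
  refine (tendsto_exp_atBot.comp hexponent).congr fun n => ?_
  simp only [Function.comp_apply]
  ring_nf

lemma isBigO_one_sub_exp_shift_sub_one (l k : ℝ) :
    (fun n : ℕ => (1 - exp (-2 * ((n : ℝ) + 1 + k) * l)) - 1)
      =O[atTop] (fun n : ℕ => exp (-2 * ((n : ℝ) + 1) * l)) := by
  refine ((isBigO_refl _ _).const_mul_left (-exp (-2 * k * l))).congr_left fun n => ?_
  rw [neg_mul, ← exp_add]
  ring_nf

theorem omega_absolute_error_general (l : ℝ) (hl : 0 < l) (i j : ℤ) :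
    (fun n : ℕ =>
        Real.exp (-((j : ℝ) - i) * l) *
            Real.sqrt ((1 - Real.exp (-2 * ((n : ℝ) + 1 - j) * l)) *
                (1 - Real.exp (-2 * ((n : ℝ) + 1 + i) * l)) /
              ((1 - Real.exp (-2 * ((n : ℝ) + 1 - i) * l)) *
                (1 - Real.exp (-2 * ((n : ℝ) + 1 + j) * l)))) -
          Real.exp (-((j : ℝ) - i) * l))
      =O[Filter.atTop] (fun n : ℕ => Real.exp (-2 * ((n : ℝ) + 1) * l)) := by
  have hε := tendsto_exp_neg_two_mul_succ_mul hl
  have factor := isBigO_one_sub_exp_shift_sub_one l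
  have factor_sub (k : ℝ) : (fun n : ℕ => (1 - exp (-2 * ((n : ℝ) + 1 - k) * l)) - 1)
      =O[atTop] (fun n : ℕ => exp (-2 * ((n : ℝ) + 1) * l)) := by
    simpa only [← sub_eq_add_neg] using factor (-k)
  exact isBigO_const_mul_sqrt_sub _ <| isBigO_div_sub_one hε
    (isBigO_mul_sub_one hε (factor_sub j) (factor i))
    (isBigO_mul_sub_one hε (factor_sub i) (factor j))

theorem omega_absolute_error (l : ℝ) (hl : 0 < l) (i j : ℤ) (hij : i < j) :
    (fun n : ℕ =>
        Real.exp (-((j : ℝ) - i) * l) *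
            Real.sqrt ((1 - Real.exp (-2 * ((n : ℝ) + 1 - j) * l)) *
                (1 - Real.exp (-2 * ((n : ℝ) + 1 + i) * l)) /
              ((1 - Real.exp (-2 * ((n : ℝ) + 1 - i) * l)) *
                (1 - Real.exp (-2 * ((n : ℝ) + 1 + j) * l)))) -
          Real.exp (-((j : ℝ) - i) * l))
      =O[Filter.atTop] (fun n : ℕ => Real.exp (-2 * ((n : ℝ) + 1) * l)) :=
  omega_absolute_error_general l hl i j
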